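/- Let M be a nonzero proper closed subspace of a real Banach space E. Then M does not have property-USNP with respect to the generating family ℱ of the weak topology on E; that is, there exist a continuous linear functional f on M, a finite set F ⊆ B_{E*} with χ_{ρ_F}^M(f) < ∞, and two distinct f₁, f₂ ∈ E* with f₁|_M = f₂|_M = f and χ_{ρ_F}^E(f₁) = χ_{ρ_F}^E(f₂) = χ_{ρ_F}^M(f). -/

import Mathlib

open scoped ENNReal

noncomputable section

/-- `χ_ρ(g) = sup { |g v| : ρ v ≤ 1 } ∈ [0,∞]`. -/
def chi {V : Type*} [AddCommGroup V] [Module ℝ V] [TopologicalSpace V]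
    (ρ : V → ℝ) (g : V →L[ℝ] ℝ) : ℝ≥0∞ :=
  ⨆ v ∈ {v : V | ρ v ≤ 1}, ENNReal.ofReal |g v|

/-- The seminorm `ρ_F(x) = max_{f ∈ F} |f x|` of the weak topology, for a finite
set `F` of functionals. -/
def rhoF {E : Type*} [NormedAddCommGroup E] [NormedSpace ℝ E]
    (F : Finset (E →L[ℝ] ℝ)) (x : E) : ℝ :=
  ⨆ f ∈ F, |f x|

/-- `M` has property-USNP with respect to the generating family
`ℱ = {ρ_F : F ⊆ B_{E*} finite}` of the weak topology on `E`. -/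
def USNPweak {E : Type*} [NormedAddCommGroup E] [NormedSpace ℝ E]
    (M : Submodule ℝ E) : Prop :=
  ∀ f : M →L[ℝ] ℝ, ∃ ft : E →L[ℝ] ℝ,
    ∀ F : Finset (E →L[ℝ] ℝ), (∀ φ ∈ F, ‖φ‖ ≤ 1) →
      chi (fun y : M => rhoF F (y : E)) f < ⊤ →
        (ft.comp M.subtypeL = f ∧ chi (rhoF F) ft = chi (fun y : M => rhoF F (y : E)) f) ∧
        ∀ g : E →L[ℝ] ℝ, g.comp M.subtypeL = f →
          chi (rhoF F) g = chi (fun y : M => rhoF F (y : E)) f → g = ft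

theorem rhoF_le_one_iff' {E : Type*} [NormedAddCommGroup E] [NormedSpace ℝ E]
    (F : Finset (E →L[ℝ] ℝ)) (x : E) :
    rhoF F x ≤ 1 ↔ ∀ f ∈ F, |f x| ≤ 1 := by
  rw [rhoF]
  constructor
  · intro h f hf
    refine le_trans ?_ h
    have hb : BddAbove (Set.range fun f : E →L[ℝ] ℝ => ⨆ _ : f ∈ F, |f x|) := by
      refine ⟨∑ g ∈ F, |g x|, ?_⟩
      rintro y ⟨g, rfl⟩
      by_cases hg : g ∈ F
      · simp only [ciSup_pos hg]
        exact Finset.single_le_sum (f := fun g => |g x|) (fun i _ => abs_nonneg _) hg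
      · have : IsEmpty (g ∈ F) := ⟨hg⟩
        simp only []
        rw [show (⨆ _ : g ∈ F, |g x|) = 0 from Real.iSup_of_isEmpty _]
        exact Finset.sum_nonneg (fun i _ => abs_nonneg (i x))
    refine le_trans (ciSup_pos (f := fun _ : f ∈ F => |f x|) hf).ge (le_ciSup hb f)
  · intro h
    refine Real.iSup_le (fun f => Real.iSup_le (fun hf => h f hf) zero_le_one) zero_le_one

theorem chi_le_ofReal {V : Type*} [AddCommGroup V] [Module ℝ V] [TopologicalSpace V]
    (ρ : V → ℝ) (g : V →L[ℝ] ℝ) (c : ℝ) (h : ∀ v, ρ v ≤ 1 → |g v| ≤ c) :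
    chi ρ g ≤ ENNReal.ofReal c :=
  iSup₂_le fun v hv => ENNReal.ofReal_le_ofReal (h v hv)

theorem ofReal_le_chi {V : Type*} [AddCommGroup V] [Module ℝ V] [TopologicalSpace V]
    (ρ : V → ℝ) (g : V →L[ℝ] ℝ) (v : V) (hv : ρ v ≤ 1) :
    ENNReal.ofReal |g v| ≤ chi ρ g :=
  le_iSup₂ (f := fun v (_ : v ∈ {v : V | ρ v ≤ 1}) => ENNReal.ofReal |g v|) v hv

set_option maxHeartbeats 1000000
theorem statement11 {E : Type*} [NormedAddCommGroup E] [NormedSpace ℝ E] [CompleteSpace E]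
    (M : Submodule ℝ E) (hM0 : M ≠ ⊥) (hM : M ≠ ⊤) (hMc : IsClosed (M : Set E)) :
    ¬ USNPweak M ∧
      ∃ (f : M →L[ℝ] ℝ) (F : Finset (E →L[ℝ] ℝ)), (∀ φ ∈ F, ‖φ‖ ≤ 1) ∧
        chi (fun y : M => rhoF F (y : E)) f < ⊤ ∧
        ∃ f₁ f₂ : E →L[ℝ] ℝ, f₁ ≠ f₂ ∧ f₁.comp M.subtypeL = f ∧ f₂.comp M.subtypeL = f ∧
          chi (rhoF F) f₁ = chi (fun y : M => rhoF F (y : E)) f ∧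
          chi (rhoF F) f₂ = chi (fun y : M => rhoF F (y : E)) f := by
  classical
  -- a unit vector `e` in `M`
  obtain ⟨y0, hy0M, hy0⟩ := Submodule.exists_mem_ne_zero_of_ne_bot hM0
  set e : E := ‖y0‖⁻¹ • y0 with he_def
  have heM : e ∈ M := M.smul_mem _ hy0M
  have he : ‖e‖ = 1 := by
    rw [he_def, norm_smul, norm_inv, norm_norm]
    exact inv_mul_cancel₀ (norm_ne_zero_iff.mpr hy0)
  have he0 : e ≠ 0 := by
    intro h; rw [h, norm_zero] at he; norm_num at he
  -- a norm-one functional `ψ` with `ψ e = 1`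
  obtain ⟨ψ, hψn, hψe'⟩ := exists_dual_vector ℝ e (norm_ne_zero_iff.mpr he0)
  have hψe : ψ e = 1 := by rw [hψe', he]; norm_num
  -- a point outside `M`
  obtain ⟨x0, hx0⟩ : ∃ x : E, x ∉ M := by
    by_contra h
    push_neg at h
    exact hM (Submodule.eq_top_iff'.mpr h)
  -- separation: a functional vanishing on `M` but not at `x0`
  obtain ⟨g, u, hgu, hux⟩ :=
    geometric_hahn_banach_closed_point (M.convex (𝕜 := ℝ)) hMc hx0
  have hu0 : 0 < u := by
    have := hgu 0 M.zero_mem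
    simpa using this
  have hgM : ∀ y ∈ M, g y = 0 := by
    intro y hy
    by_contra hgy
    have h1 : g (((u + 1) / g y) • y) < u := hgu _ (M.smul_mem _ hy)
    rw [map_smul, smul_eq_mul, div_mul_cancel₀ _ hgy] at h1
    linarith
  have hgx0 : g x0 ≠ 0 := by
    have := hgu 0 M.zero_mem  -- 0 < u < g x0
    intro h; rw [h] at hux; linarith
  have hg0 : g ≠ 0 := fun h => hgx0 (by rw [h]; rfl)
  have hgn : ‖g‖ ≠ 0 := norm_ne_zero_iff.mpr hg0
  set φ : E →L[ℝ] ℝ := ‖g‖⁻¹ • g with hφ_def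
  have hφn : ‖φ‖ ≤ 1 := by
    rw [hφ_def]
    refine le_trans (ContinuousLinearMap.opNorm_smul_le _ _) ?_
    rw [norm_inv, norm_norm, inv_mul_cancel₀ hgn]
  have hφM : ∀ y ∈ M, φ y = 0 := by
    intro y hy
    rw [hφ_def]
    simp [hgM y hy]
  have hφx0 : φ x0 ≠ 0 := by
    rw [hφ_def]
    simp only [ContinuousLinearMap.coe_smul', Pi.smul_apply, smul_eq_mul]
    exact mul_ne_zero (inv_ne_zero hgn) hgx0
  have hφ0 : φ ≠ 0 := fun h => hφx0 (by rw [h]; rfl)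
  -- the data
  set α : E →L[ℝ] ℝ := (1/2 : ℝ) • (ψ + φ) with hα_def
  set β : E →L[ℝ] ℝ := (1/2 : ℝ) • (ψ - φ) with hβ_def
  set F : Finset (E →L[ℝ] ℝ) := {α, β} with hF_def
  set f : M →L[ℝ] ℝ := ψ.comp M.subtypeL with hf_def
  have hαx : ∀ x : E, α x = (ψ x + φ x) / 2 := by
    intro x; rw [hα_def]; simp; ring
  have hβx : ∀ x : E, β x = (ψ x - φ x) / 2 := by
    intro x; rw [hβ_def]; simp; ring
  have hαβ : ∀ x : E, ψ x = α x + β x := by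
    intro x; rw [hαx, hβx]; ring
  have hF1 : ∀ σ ∈ F, ‖σ‖ ≤ 1 := by
    intro σ hσ
    rw [hF_def] at hσ
    simp only [Finset.mem_insert, Finset.mem_singleton] at hσ
    rcases hσ with rfl | rfl
    · rw [hα_def]
      refine le_trans (ContinuousLinearMap.opNorm_smul_le _ _) ?_
      calc ‖(1/2 : ℝ)‖ * ‖ψ + φ‖ ≤ (1/2) * (‖ψ‖ + ‖φ‖) := by
            rw [Real.norm_eq_abs, abs_of_nonneg (by norm_num : (0:ℝ) ≤ 1/2)]
            have := norm_add_le ψ φ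
            linarith
        _ ≤ 1 := by rw [hψn]; linarith
    · rw [hβ_def]
      refine le_trans (ContinuousLinearMap.opNorm_smul_le _ _) ?_
      calc ‖(1/2 : ℝ)‖ * ‖ψ - φ‖ ≤ (1/2) * (‖ψ‖ + ‖φ‖) := by
            rw [Real.norm_eq_abs, abs_of_nonneg (by norm_num : (0:ℝ) ≤ 1/2)]
            have := norm_sub_le ψ φ
            linarith
        _ ≤ 1 := by rw [hψn]; linarith
  have hαmem : α ∈ F := by rw [hF_def]; simp
  have hβmem : β ∈ F := by rw [hF_def]; simp
  -- the witness point `2 • e`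
  set w : E := (2 : ℝ) • e with hw_def
  have hwM : w ∈ M := M.smul_mem _ heM
  have hψw : ψ w = 2 := by rw [hw_def, map_smul, smul_eq_mul, hψe]; norm_num
  have hφw : φ w = 0 := hφM w hwM
  have hρw : rhoF F w ≤ 1 := by
    rw [rhoF_le_one_iff']
    intro σ hσ
    rw [hF_def] at hσ
    simp only [Finset.mem_insert, Finset.mem_singleton] at hσ
    rcases hσ with rfl | rfl
    · rw [hαx, hψw, hφw]; norm_num
    · rw [hβx, hψw, hφw]; norm_num
  -- the module-side value of chi
  have hchiM : chi (fun y : M => rhoF F (y : E)) f = ENNReal.ofReal 2 := by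
    apply le_antisymm
    · refine chi_le_ofReal _ _ _ fun y hy => ?_
      rw [rhoF_le_one_iff'] at hy
      have h1 := hy α hαmem
      have h2 := hy β hβmem
      have : f y = ψ (y : E) := rfl
      rw [this, hαβ]
      calc |α (y : E) + β (y : E)| ≤ |α (y : E)| + |β (y : E)| := abs_add_le _ _
        _ ≤ 2 := by linarith
    · have hfw : f (⟨w, hwM⟩ : M) = 2 := by
        have : f (⟨w, hwM⟩ : M) = ψ w := rfl
        rw [this, hψw]
      calc ENNReal.ofReal 2 = ENNReal.ofReal |f (⟨w, hwM⟩ : M)| := by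
            rw [hfw]; norm_num
        _ ≤ _ := ofReal_le_chi _ _ (⟨w, hwM⟩ : M) hρw
  have hchi1 : chi (rhoF F) ψ = ENNReal.ofReal 2 := by
    apply le_antisymm
    · refine chi_le_ofReal _ _ _ fun x hx => ?_
      rw [rhoF_le_one_iff'] at hx
      have h1 := hx α hαmem
      have h2 := hx β hβmem
      rw [hαβ]
      calc |α x + β x| ≤ |α x| + |β x| := abs_add_le _ _
        _ ≤ 2 := by linarith
    · calc ENNReal.ofReal 2 = ENNReal.ofReal |ψ w| := by rw [hψw]; norm_num
        _ ≤ _ := ofReal_le_chi _ _ w hρw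
  have hchi2 : chi (rhoF F) (ψ + φ) = ENNReal.ofReal 2 := by
    apply le_antisymm
    · refine chi_le_ofReal _ _ _ fun x hx => ?_
      rw [rhoF_le_one_iff'] at hx
      have h1 := hx α hαmem
      have : (ψ + φ) x = 2 * α x := by
        rw [hαx]; simp; ring
      rw [this, abs_mul]
      calc |(2:ℝ)| * |α x| ≤ 2 * 1 := by
            rw [abs_two]
            exact mul_le_mul_of_nonneg_left h1 (by norm_num)
        _ = 2 := by norm_num
    · have : (ψ + φ) w = 2 := by simp [hψw, hφw]
      calc ENNReal.ofReal 2 = ENNReal.ofReal |(ψ + φ) w| := by rw [this]; norm_num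
        _ ≤ _ := ofReal_le_chi _ _ w hρw
  have hcomp1 : ψ.comp M.subtypeL = f := rfl
  have hcomp2 : (ψ + φ).comp M.subtypeL = f := by
    ext y
    have : φ (y : E) = 0 := hφM _ y.2
    simp [hf_def, this]
  have hne : ψ ≠ ψ + φ := by
    intro h
    have : ψ x0 = (ψ + φ) x0 := by rw [← h]
    simp only [ContinuousLinearMap.add_apply] at this
    exact hφx0 (by linarith)
  have hlt : chi (fun y : M => rhoF F (y : E)) f < ⊤ := by
    rw [hchiM]; exact ENNReal.ofReal_lt_top
  constructor
  · intro hU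
    obtain ⟨ft, hft⟩ := hU f
    obtain ⟨-, huniq⟩ := hft F hF1 hlt
    have h1 : ψ = ft := huniq ψ hcomp1 (by rw [hchi1, hchiM])
    have h2 : ψ + φ = ft := huniq (ψ + φ) hcomp2 (by rw [hchi2, hchiM])
    exact hne (h1.trans h2.symm)
  · exact ⟨f, F, hF1, hlt, ψ, ψ + φ, hne, hcomp1, hcomp2,
      hchi1.trans hchiM.symm, hchi2.trans hchiM.symm⟩
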